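/- arXiv:2211.09857 — 8 statements merged into one kernel-verified Lean document; each statement's English description precedes it below -/
import Mathlib

section
/- Let α > 0 and θ₀ > 0. (1) There exist constants c₁, c₂ ∈ ℝ, not both zero, such that c₁·cos(αθ) + c₂·sin(αθ) ≥ 0 for all θ ∈ [0, θ₀] if and only if αθ₀ ≤ π. (2) Moreover, if 0 < αθ₀ < π and ρ₀, ρ₁ ≥ 0, then the function ρ(θ) = ρ₀·cos(αθ) + ((ρ₁ − ρ₀·cos(αθ₀))/sin(αθ₀))·sin(αθ) satisfies ρ(θ) ≥ 0 for all θ ∈ [0, θ₀]. -/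
/-- (1) A nontrivial nonnegative function `c₁ cos(αθ) + c₂ sin(αθ)` on `[0,θ₀]`
exists iff `αθ₀ ≤ π`.  (2) If `0 < αθ₀ < π` and `ρ₀, ρ₁ ≥ 0`, the function
determined by the boundary values `ρ₀, ρ₁` is nonnegative on `[0,θ₀]`. -/
theorem stmt_2 (α θ₀ : ℝ) (hα : 0 < α) (hθ₀ : 0 < θ₀) :
    ((∃ c₁ c₂ : ℝ, ¬(c₁ = 0 ∧ c₂ = 0) ∧
        ∀ θ ∈ Set.Icc (0 : ℝ) θ₀, 0 ≤ c₁ * Real.cos (α * θ) + c₂ * Real.sin (α * θ))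
      ↔ α * θ₀ ≤ Real.pi) ∧
    (∀ ρ₀ ρ₁ : ℝ, 0 ≤ ρ₀ → 0 ≤ ρ₁ → α * θ₀ < Real.pi →
      ∀ θ ∈ Set.Icc (0 : ℝ) θ₀,
        0 ≤ ρ₀ * Real.cos (α * θ)
            + ((ρ₁ - ρ₀ * Real.cos (α * θ₀)) / Real.sin (α * θ₀)) * Real.sin (α * θ)) := by
  have hπ := Real.pi_pos
  constructor
  · constructor
    · rintro ⟨c₁, c₂, hne, h⟩
      by_contra hlt
      push_neg at hlt
      apply hne
      -- evaluate at θ = 0 and θ = π/α to get c₁ = 0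
      have h0 := h 0 ⟨le_refl _, hθ₀.le⟩
      simp at h0
      have hp := h (Real.pi / α) ⟨by positivity, by
        rw [div_le_iff₀ hα]; nlinarith⟩
      rw [mul_div_cancel₀ _ hα.ne', Real.cos_pi, Real.sin_pi] at hp
      have hc₁ : c₁ = 0 := by nlinarith
      subst hc₁
      -- now pick x = min (αθ₀ - π) π / 2
      set x : ℝ := min (α * θ₀ - Real.pi) Real.pi / 2 with hx
      have hx0 : 0 < x := by
        have : 0 < min (α * θ₀ - Real.pi) Real.pi := lt_min (by linarith) hπ
        positivity
      have hxπ : x < Real.pi := by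
        have : x ≤ Real.pi / 2 := by
          have := min_le_right (α * θ₀ - Real.pi) Real.pi
          simp only [hx]; linarith
        linarith
      have hxδ : x + Real.pi ≤ α * θ₀ := by
        have := min_le_left (α * θ₀ - Real.pi) Real.pi
        simp only [hx]; linarith
      have hsx : 0 < Real.sin x := Real.sin_pos_of_pos_of_lt_pi hx0 hxπ
      have h1 := h (x / α) ⟨by positivity, by rw [div_le_iff₀ hα]; nlinarith⟩
      rw [mul_div_cancel₀ _ hα.ne'] at h1
      have h2 := h ((x + Real.pi) / α) ⟨by positivity, by
        rw [div_le_iff₀ hα]; nlinarith⟩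
      rw [mul_div_cancel₀ _ hα.ne', Real.sin_add_pi] at h2
      have hc₂ : c₂ = 0 := by nlinarith
      exact ⟨rfl, hc₂⟩
    · intro hle
      refine ⟨0, 1, by simp, fun θ ⟨h0, h1⟩ => ?_⟩
      have : 0 ≤ Real.sin (α * θ) := by
        apply Real.sin_nonneg_of_nonneg_of_le_pi (by positivity)
        nlinarith
      simpa using this
  · intro ρ₀ ρ₁ hρ₀ hρ₁ hlt θ ⟨h0, h1⟩
    have hs : 0 < Real.sin (α * θ₀) :=
      Real.sin_pos_of_pos_of_lt_pi (by positivity) hlt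
    have key : ρ₀ * Real.cos (α * θ)
        + ((ρ₁ - ρ₀ * Real.cos (α * θ₀)) / Real.sin (α * θ₀)) * Real.sin (α * θ)
        = (ρ₀ * Real.sin (α * θ₀ - α * θ) + ρ₁ * Real.sin (α * θ)) / Real.sin (α * θ₀) := by
      rw [Real.sin_sub]
      field_simp
      ring
    rw [key]
    apply div_nonneg _ hs.le
    have hs1 : 0 ≤ Real.sin (α * θ₀ - α * θ) := by
      apply Real.sin_nonneg_of_nonneg_of_le_pi
      · nlinarith
      · nlinarith
    have hs2 : 0 ≤ Real.sin (α * θ) := by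
      apply Real.sin_nonneg_of_nonneg_of_le_pi (by positivity)
      nlinarith
    positivity
end

section
/- Let α > 0, θ₀ > 0 and φ₀ ∈ (0, π) with 0 < αθ₀ < π, and let ρ₀, ρ₁ ≥ 0. Define χ(θ) = ρ₀·cos(αθ) + ((ρ₁·cos(φ₀) − ρ₀·cos(αθ₀))/sin(αθ₀))·sin(αθ) and η(θ) = (sin(φ₀)/sin(αθ₀))·ρ₁·sin(αθ). Then for every θ ∈ [0, θ₀] one has η(θ) ≥ 0 and χ(θ)·sin(φ₀) ≥ η(θ)·cos(φ₀); that is, the point (χ(θ), η(θ)) lies in the closed plane sector S_{φ₀} = {(r cos t, r sin t) : r ≥ 0, 0 ≤ t ≤ φ₀}. -/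
/-- The degree-`α` homogeneous harmonic map `u(r,θ) = r^α (χ(θ), η(θ))` from the
sector `S_{θ₀}` to the sector `S_{φ₀}` determined by the boundary values
`ρ₀, ρ₁ ≥ 0` has image contained in the closed sector `S_{φ₀}`:
for all `θ ∈ [0,θ₀]` one has `η(θ) ≥ 0` and `χ(θ) sin φ₀ ≥ η(θ) cos φ₀`. -/
theorem stmt_3 (α θ₀ φ₀ ρ₀ ρ₁ : ℝ) (hα : 0 < α) (hθ₀ : 0 < θ₀)
    (hφ₀ : φ₀ ∈ Set.Ioo (0 : ℝ) Real.pi) (hsing : α * θ₀ < Real.pi)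
    (hρ₀ : 0 ≤ ρ₀) (hρ₁ : 0 ≤ ρ₁) :
    ∀ θ ∈ Set.Icc (0 : ℝ) θ₀,
      0 ≤ (Real.sin φ₀ / Real.sin (α * θ₀)) * ρ₁ * Real.sin (α * θ) ∧
      ((Real.sin φ₀ / Real.sin (α * θ₀)) * ρ₁ * Real.sin (α * θ)) * Real.cos φ₀ ≤
        (ρ₀ * Real.cos (α * θ)
          + ((ρ₁ * Real.cos φ₀ - ρ₀ * Real.cos (α * θ₀)) / Real.sin (α * θ₀))
              * Real.sin (α * θ)) * Real.sin φ₀ := by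
  intro θ hθ
  obtain ⟨hθ0, hθ1⟩ := hθ
  have hs : 0 < Real.sin (α * θ₀) :=
    Real.sin_pos_of_pos_of_lt_pi (by positivity) hsing
  have hφs : 0 < Real.sin φ₀ := Real.sin_pos_of_pos_of_lt_pi hφ₀.1 hφ₀.2
  have hle : α * θ ≤ α * θ₀ := by nlinarith
  have hsinθ : 0 ≤ Real.sin (α * θ) :=
    Real.sin_nonneg_of_nonneg_of_le_pi (by positivity) (by linarith)
  constructor
  · have : 0 ≤ Real.sin φ₀ / Real.sin (α * θ₀) := by positivity
    exact mul_nonneg (mul_nonneg this hρ₁) hsinθ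
  · have hsin2 : 0 ≤ Real.sin (α * θ₀ - α * θ) :=
      Real.sin_nonneg_of_nonneg_of_le_pi (by linarith) (by nlinarith)
    have key : Real.sin (α * θ₀ - α * θ) =
        Real.sin (α * θ₀) * Real.cos (α * θ) - Real.cos (α * θ₀) * Real.sin (α * θ) := by
      rw [Real.sin_sub]
    rw [← sub_nonneg]
    have h : (ρ₀ * Real.cos (α * θ)
          + ((ρ₁ * Real.cos φ₀ - ρ₀ * Real.cos (α * θ₀)) / Real.sin (α * θ₀))
              * Real.sin (α * θ)) * Real.sin φ₀
        - ((Real.sin φ₀ / Real.sin (α * θ₀)) * ρ₁ * Real.sin (α * θ)) * Real.cos φ₀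
        = ρ₀ * Real.sin φ₀ * Real.sin (α * θ₀ - α * θ) / Real.sin (α * θ₀) := by
      rw [key]; field_simp; ring
    rw [h]
    positivity
end

section
/- Let G be a connected finite simple graph on at least 2 vertices with symmetric edge weights θ_{ij} = θ_{ji} > 0 assigned to each adjacent pair, and let ρ : V(G) → ℝ be not identically zero. Define Q(α) = Σ_{{i,j} ∈ E(G)} (2ρ_i ρ_j − cos(αθ_{ij})(ρ_i² + ρ_j²))/sin(αθ_{ij}). Then Q is strictly increasing on any interval I ⊆ (0,∞) such that sin(αθ_{ij}) ≠ 0 for all α ∈ I and all edges {i,j}. -/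
open Finset Real

/-!
Each edge term `(2ab - cos(αt)(a² + b²)) / sin(αt)` has derivative
`t ((b - a cos αt)² + (a sin αt)²) / sin² αt`, which is nonnegative, and positive as soon as
`a ≠ 0` and `t > 0`. So every term of `Q` is nondecreasing on an interval of nonsingular degrees,
and, since a connected graph on at least two vertices has no isolated vertex, some term with
`ρᵢ ≠ 0` is strictly increasing.
-/

noncomputable section

def edgeTerm (a b t α : ℝ) : ℝ :=
  (2 * a * b - cos (α * t) * (a ^ 2 + b ^ 2)) / sin (α * t)

lemma hasDerivAt_edgeTerm (a b t α : ℝ) (hs : sin (α * t) ≠ 0) :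
    HasDerivAt (edgeTerm a b t)
      (t * ((b - a * cos (α * t)) ^ 2 + (a * sin (α * t)) ^ 2) / sin (α * t) ^ 2) α := by
  have hlin : HasDerivAt (fun α : ℝ => α * t) t α := by
    simpa using (hasDerivAt_id α).mul_const t
  have hnum := (hlin.cos.mul_const (a ^ 2 + b ^ 2)).const_sub (2 * a * b)
  refine (hnum.div hlin.sin hs).congr_deriv ?_
  rw [div_left_inj' (pow_ne_zero 2 hs)]
  linear_combination (t * (a ^ 2 + b ^ 2) - t * a ^ 2) * sin_sq_add_cos_sq (α * t)

variable {I : Set ℝ} {t : ℝ}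

lemma continuousOn_edgeTerm (a b : ℝ) (hs : ∀ α ∈ I, sin (α * t) ≠ 0) :
    ContinuousOn (edgeTerm a b t) I := fun α hα =>
  (hasDerivAt_edgeTerm a b t α (hs α hα)).continuousAt.continuousWithinAt

lemma monotoneOn_edgeTerm (a b : ℝ) (ht : 0 ≤ t) (hI : I.OrdConnected)
    (hs : ∀ α ∈ I, sin (α * t) ≠ 0) : MonotoneOn (edgeTerm a b t) I := by
  refine monotoneOn_of_deriv_nonneg hI.convex (continuousOn_edgeTerm a b hs)
    (fun α hα => ?_) (fun α hα => ?_)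
  · exact (hasDerivAt_edgeTerm a b t α (hs α (interior_subset hα))).differentiableAt
      |>.differentiableWithinAt
  · rw [(hasDerivAt_edgeTerm a b t α (hs α (interior_subset hα))).deriv]
    positivity

lemma strictMonoOn_edgeTerm {a : ℝ} (b : ℝ) (ha : a ≠ 0) (ht : 0 < t) (hI : I.OrdConnected)
    (hs : ∀ α ∈ I, sin (α * t) ≠ 0) : StrictMonoOn (edgeTerm a b t) I := by
  refine strictMonoOn_of_deriv_pos hI.convex (continuousOn_edgeTerm a b hs) fun α hα => ?_
  have hsα := hs α (interior_subset hα)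
  rw [(hasDerivAt_edgeTerm a b t α hsα).deriv]
  have : 0 < (a * sin (α * t)) ^ 2 := by positivity
  positivity

end

theorem stmt_5_general (n : ℕ) (hn : 2 ≤ n) (G : SimpleGraph (Fin n)) [DecidableRel G.Adj]
    (hconn : G.Connected)
    (θ : Fin n → Fin n → ℝ)
    (hpos : ∀ i j, G.Adj i j → 0 < θ i j)
    (ρ : Fin n → ℝ) (hρ : ρ ≠ 0)
    (I : Set ℝ) (hI : I.OrdConnected)
    (hns : ∀ α ∈ I, ∀ i j, G.Adj i j → Real.sin (α * θ i j) ≠ 0) :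
    StrictMonoOn (fun α : ℝ =>
      (1 / 2 : ℝ) * ∑ i, ∑ j ∈ G.neighborFinset i,
        (2 * ρ i * ρ j - Real.cos (α * θ i j) * (ρ i ^ 2 + ρ j ^ 2))
          / Real.sin (α * θ i j)) I := by
  change StrictMonoOn (fun α => (1 / 2 : ℝ) * ∑ i, ∑ j ∈ G.neighborFinset i,
    edgeTerm (ρ i) (ρ j) (θ i j) α) I
  have hmono : ∀ i, ∀ j ∈ G.neighborFinset i, MonotoneOn (edgeTerm (ρ i) (ρ j) (θ i j)) I :=
    fun i j hj => by
      rw [SimpleGraph.mem_neighborFinset] at hj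
      exact monotoneOn_edgeTerm _ _ (hpos i j hj).le hI fun α hα => hns α hα i j hj
  obtain ⟨v, hv⟩ := Function.ne_iff.mp hρ
  have : Nontrivial (Fin n) := Fin.nontrivial_iff_two_le.mpr hn
  obtain ⟨w, hvw⟩ := hconn.preconnected.exists_adj_of_nontrivial v
  have hstrict : StrictMonoOn (edgeTerm (ρ v) (ρ w) (θ v w)) I :=
    strictMonoOn_edgeTerm _ hv (hpos v w hvw) hI fun α hα => hns α hα v w hvw
  intro a ha b hb hab
  refine mul_lt_mul_of_pos_left (sum_lt_sum (fun i _ => ?_) ⟨v, mem_univ v, ?_⟩) one_half_pos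
  · exact sum_le_sum fun j hj => hmono i j hj ha hb hab.le
  · exact sum_lt_sum (fun j hj => hmono v j hj ha hb hab.le)
      ⟨w, (G.mem_neighborFinset v w).mpr hvw, hstrict ha hb hab⟩

/-- The quadratic form `Q(α) = ρ·Δ_{αθ}ρ = ∑_{edges {i,j}}
(2ρᵢρⱼ - cos(αθᵢⱼ)(ρᵢ² + ρⱼ²))/sin(αθᵢⱼ)` (written here as half the sum over
ordered adjacent pairs, which agrees with the edge sum since `θ` is symmetric)
is strictly increasing in `α` on any interval of nonsingular degrees. -/
theorem stmt_5 (n : ℕ) (hn : 2 ≤ n) (G : SimpleGraph (Fin n)) [DecidableRel G.Adj]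
    (hconn : G.Connected)
    (θ : Fin n → Fin n → ℝ) (hsym : ∀ i j, θ i j = θ j i)
    (hpos : ∀ i j, G.Adj i j → 0 < θ i j)
    (ρ : Fin n → ℝ) (hρ : ρ ≠ 0)
    (I : Set ℝ) (hI : I.OrdConnected) (hIpos : I ⊆ Set.Ioi (0 : ℝ))
    (hns : ∀ α ∈ I, ∀ i j, G.Adj i j → Real.sin (α * θ i j) ≠ 0) :
    StrictMonoOn (fun α : ℝ =>
      (1 / 2 : ℝ) * ∑ i, ∑ j ∈ G.neighborFinset i,
        (2 * ρ i * ρ j - Real.cos (α * θ i j) * (ρ i ^ 2 + ρ j ^ 2))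
          / Real.sin (α * θ i j)) I :=
  stmt_5_general n hn G hconn θ hpos ρ hρ I hI hns
end

section
/- Let G be a connected finite simple graph on n ≥ 2 vertices that is not a complete graph, with edge weights θ_{ij} = θ_{ji} ∈ (0, π) on adjacent pairs, and set θ_max = max over edges of θ_{ij}. Let λ₁ be the smallest positive eigenvalue of the normalized graph Laplacian ℒ of G. Suppose α > 0 is such that sin(αθ_{ij}) ≠ 0 for all edges and there exists a nonzero vector ρ : V(G) → ℝ satisfying, for every vertex i, Σ_{j ~ i} (ρ_j − cos(αθ_{ij})·ρ_i)/sin(αθ_{ij}) = 0. Then α ≥ arccos(1 − λ₁)/θ_max. -/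
open Finset

/-- The normalized graph Laplacian of a finite simple graph. -/
noncomputable def normLap (n : ℕ) (G : SimpleGraph (Fin n)) [DecidableRel G.Adj] :
    Matrix (Fin n) (Fin n) ℝ :=
  fun i j =>
    if i = j then 1
    else if G.Adj i j then -(1 / Real.sqrt ((G.degree i : ℝ) * (G.degree j : ℝ)))
    else 0

/-!
Write `s i j = α * θ i j`. The balancing conditions say that `ρ` lies in the kernel of the
symmetric matrix `M_s = balancingMatrix G s`, whose quadratic form is one half of
`∑_{i ~ j} (cos s_ij * (x_i ^ 2 + x_j ^ 2) - 2 x_i x_j) / sin s_ij`.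
Suppose `α * θ_max < arccos (1 - λ₁)`, and put `σ = α * θ_max`; then every `s_ij` lies in
`(0, σ]`, `σ < π` and `1 - cos σ < λ₁`. Each edge term is antitone in the angle on `(0, π)`, so
`M_s ≥ M_σ = (L - (1 - cos σ) D) / sin σ`, where `L = D - A` is the combinatorial Laplacian.
For `x` with `∑ d_i x_i = 0`, the substitution `y = D^{1/2} x` turns the spectral gap of the
normalized Laplacian into `x ⬝ L x ≥ λ₁ (x ⬝ D x)`, so `M_s` is positive definite on that
hyperplane. Removing from `ρ` its degree-weighted mean `c` gives a vector `v` there, and since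
`M_s ρ = 0` the form takes at `v` the value `c² (𝟙 ⬝ M_s 𝟙)`, which is negative unless `c = 0`.
So `c = 0` and `v = ρ = 0`.
-/

open Matrix Real

theorem Real.abs_sin_sub_sin_le_sin_sub {s t : ℝ} (ht : 0 ≤ t) (hts : t ≤ s) (hs : s ≤ π) :
    |sin s - sin t| ≤ sin (s - t) := by
  have hsin : 0 ≤ sin ((s - t) / 2) := sin_nonneg_of_nonneg_of_le_pi (by linarith) (by linarith)
  have hcos : |cos ((s + t) / 2)| ≤ cos ((s - t) / 2) := by
    rw [abs_le, ← cos_pi_sub]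
    constructor
    · exact cos_le_cos_of_nonneg_of_le_pi (by linarith) (by linarith) (by linarith)
    · exact cos_le_cos_of_nonneg_of_le_pi (by linarith) (by linarith) (by linarith)
  calc |sin s - sin t| = 2 * sin ((s - t) / 2) * |cos ((s + t) / 2)| := by
        rw [sin_sub_sin, abs_mul, abs_of_nonneg (by positivity)]
    _ ≤ 2 * sin ((s - t) / 2) * cos ((s - t) / 2) := by gcongr
    _ = sin (s - t) := by rw [← sin_two_mul]; ring_nf

theorem Real.antitoneOn_cos_mul_sq_add_sq_sub_div_sin (x y : ℝ) :
    AntitoneOn (fun t => (cos t * (x ^ 2 + y ^ 2) - 2 * x * y) / sin t) (Set.Ioo 0 π) := by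
  intro t ht s hs hts
  have hst : 0 < sin t := sin_pos_of_pos_of_lt_pi ht.1 ht.2
  have hss : 0 < sin s := sin_pos_of_pos_of_lt_pi hs.1 hs.2
  have hxy : 2 * x * y * (sin s - sin t) ≤ (x ^ 2 + y ^ 2) * sin (s - t) :=
    calc 2 * x * y * (sin s - sin t) ≤ 2 * |x| * |y| * |sin s - sin t| := by
          simpa [abs_mul] using le_abs_self (2 * x * y * (sin s - sin t))
      _ ≤ (x ^ 2 + y ^ 2) * sin (s - t) := by
          gcongr
          · nlinarith [sq_abs x, sq_abs y, sq_nonneg (|x| - |y|)]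
          · exact abs_sin_sub_sin_le_sin_sub ht.1.le hts hs.2.le
  rw [sin_sub] at hxy
  dsimp only
  rw [div_le_div_iff₀ hss hst]
  nlinarith

theorem Real.lt_cos_of_lt_arccos {x y : ℝ} (hx : 0 ≤ x) (h : x < arccos y) : y < cos x := by
  by_contra! hle
  have := arccos_le_arccos hle
  rw [arccos_cos hx (h.le.trans (arccos_le_pi y))] at this
  linarith

theorem SimpleGraph.sum_sum_neighborFinset_comm {V M : Type*} [Fintype V] [AddCommMonoid M]
    (G : SimpleGraph V) [DecidableRel G.Adj] (f : V → V → M) :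
    ∑ i, ∑ j ∈ G.neighborFinset i, f i j = ∑ i, ∑ j ∈ G.neighborFinset i, f j i :=
  Finset.sum_comm' fun i j => by simp [G.adj_comm]

theorem Matrix.IsSymm.dotProduct_mulVec_add_of_mulVec_eq_zero {n R : Type*} [Fintype n]
    [CommSemiring R] {M : Matrix n n R} (hM : M.IsSymm) {ρ : n → R} (hρ : M *ᵥ ρ = 0)
    (w : n → R) : (ρ + w) ⬝ᵥ M *ᵥ (ρ + w) = w ⬝ᵥ M *ᵥ w := by
  have : ρ ⬝ᵥ M *ᵥ w = 0 := by
    rw [dotProduct_mulVec, ← mulVec_transpose, hM.eq, hρ, zero_dotProduct]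
  rw [mulVec_add, hρ, zero_add, add_dotProduct, this, zero_add]

theorem Matrix.PosSemidef.mul_dotProduct_self_le {n : Type*} [Fintype n] [DecidableEq n]
    {A : Matrix n n ℝ} (hA : A.PosSemidef) {lam : ℝ}
    (hlam : ∀ μ : ℝ, 0 < μ → (∃ v : n → ℝ, v ≠ 0 ∧ A *ᵥ v = μ • v) → lam ≤ μ)
    {x : n → ℝ} (hx : ∀ y, A *ᵥ y = 0 → y ⬝ᵥ x = 0) :
    lam * (x ⬝ᵥ x) ≤ x ⬝ᵥ A *ᵥ x := by
  set b := hA.isHermitian.eigenvectorBasis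
  set μ := hA.isHermitian.eigenvalues
  have hb : ∀ i, A *ᵥ b i = μ i • b i := hA.isHermitian.mulVec_eigenvectorBasis
  have parseval : ∀ y, x ⬝ᵥ y = ∑ i, (b i ⬝ᵥ x) * (b i ⬝ᵥ y) := fun y => by
    simpa [EuclideanSpace.inner_eq_star_dotProduct, dotProduct_comm, mul_comm] using
      (b.sum_inner_mul_inner (WithLp.toLp 2 x) (WithLp.toLp 2 y)).symm
  have hbA : ∀ i, b i ⬝ᵥ A *ᵥ x = μ i * (b i ⬝ᵥ x) := fun i => by
    rw [dotProduct_mulVec, ← mulVec_transpose, ← conjTranspose_eq_transpose_of_trivial,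
      hA.isHermitian.eq, hb, smul_dotProduct, smul_eq_mul]
  rw [parseval, parseval, mul_sum]
  refine sum_le_sum fun i _ => ?_
  rw [hbA, ← mul_assoc]
  rcases (show 0 ≤ μ i from hA.eigenvalues_nonneg i).eq_or_lt with hμ | hμ
  · have : b i ⬝ᵥ x = 0 := hx _ (by rw [hb, ← hμ, zero_smul])
    simp [this]
  · have hne : (b i : n → ℝ) ≠ 0 := fun h =>
      b.orthonormal.ne_zero i (by simpa using congrArg (WithLp.toLp 2) h)
    have := mul_le_mul_of_nonneg_right (hlam (μ i) hμ ⟨b i, hne, hb i⟩)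
      (mul_self_nonneg (b i ⬝ᵥ x))
    linarith

namespace SimpleGraph

variable {V : Type*} [Fintype V] [DecidableEq V] (G : SimpleGraph V) [DecidableRel G.Adj]

noncomputable def balancingMatrix (s : V → V → ℝ) : Matrix V V ℝ :=
  diagonal (fun i => ∑ j ∈ G.neighborFinset i, cos (s i j) / sin (s i j)) -
    of fun i j => if G.Adj i j then (sin (s i j))⁻¹ else 0

theorem balancingMatrix_mulVec_apply (s : V → V → ℝ) (u : V → ℝ) (i : V) :
    (G.balancingMatrix s *ᵥ u) i =
      ∑ j ∈ G.neighborFinset i, (cos (s i j) * u i - u j) / sin (s i j) := by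
  rw [balancingMatrix, sub_mulVec, Pi.sub_apply, mulVec_diagonal, mulVec, dotProduct]
  simp only [of_apply, ite_mul, zero_mul, ← sum_filter, ← neighborFinset_eq_filter, sum_mul,
    ← sum_sub_distrib]
  exact sum_congr rfl fun j _ => by ring

variable {G}

theorem isSymm_balancingMatrix {s : V → V → ℝ} (hs : ∀ i j, s i j = s j i) :
    (G.balancingMatrix s).IsSymm := by
  refine (isSymm_diagonal _).sub (IsSymm.ext fun i j => ?_)
  simp only [of_apply, G.adj_comm, hs i j]

theorem two_mul_dotProduct_balancingMatrix_mulVec {s : V → V → ℝ} (hs : ∀ i j, s i j = s j i)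
    (v : V → ℝ) :
    2 * (v ⬝ᵥ G.balancingMatrix s *ᵥ v) = ∑ i, ∑ j ∈ G.neighborFinset i,
      (cos (s i j) * (v i ^ 2 + v j ^ 2) - 2 * v i * v j) / sin (s i j) := by
  have h : v ⬝ᵥ G.balancingMatrix s *ᵥ v =
      ∑ i, ∑ j ∈ G.neighborFinset i, (cos (s i j) * v i ^ 2 - v i * v j) / sin (s i j) := by
    simp only [dotProduct, balancingMatrix_mulVec_apply, mul_sum]
    exact sum_congr rfl fun i _ => sum_congr rfl fun j _ => by ring
  rw [two_mul, h]
  nth_rw 2 [sum_sum_neighborFinset_comm]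
  simp only [← sum_add_distrib, hs]
  exact sum_congr rfl fun i _ => sum_congr rfl fun j _ => by ring

theorem dotProduct_balancingMatrix_mulVec_le_of_le {s t : V → V → ℝ} (hs : ∀ i j, s i j = s j i)
    (ht : ∀ i j, t i j = t j i)
    (hst : ∀ i j, G.Adj i j → s i j ∈ Set.Ioo 0 π ∧ t i j ∈ Set.Ioo 0 π ∧ s i j ≤ t i j)
    (v : V → ℝ) : v ⬝ᵥ G.balancingMatrix t *ᵥ v ≤ v ⬝ᵥ G.balancingMatrix s *ᵥ v := by
  suffices 2 * (v ⬝ᵥ G.balancingMatrix t *ᵥ v) ≤ 2 * (v ⬝ᵥ G.balancingMatrix s *ᵥ v) by linarith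
  rw [two_mul_dotProduct_balancingMatrix_mulVec hs, two_mul_dotProduct_balancingMatrix_mulVec ht]
  refine sum_le_sum fun i _ => sum_le_sum fun j hj => ?_
  obtain ⟨hsij, htij, hle⟩ := hst i j ((G.mem_neighborFinset i j).mp hj)
  exact antitoneOn_cos_mul_sq_add_sq_sub_div_sin (v i) (v j) hsij htij hle

variable (G)

theorem balancingMatrix_const (c : ℝ) :
    G.balancingMatrix (fun _ _ => c) =
      (sin c)⁻¹ • (G.lapMatrix ℝ - (1 - cos c) • G.degMatrix ℝ) := by
  ext i j
  by_cases hij : i = j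
  · subst hij
    simp only [balancingMatrix, lapMatrix, degMatrix, Matrix.sub_apply, Matrix.smul_apply,
      diagonal_apply_eq, of_apply, adjMatrix_apply, G.irrefl, ↓reduceIte, sub_zero, sum_const,
      card_neighborFinset_eq_degree, nsmul_eq_mul, smul_eq_mul]
    ring
  · by_cases hadj : G.Adj i j <;> simp [balancingMatrix, lapMatrix, degMatrix, hij, hadj]

theorem const_dotProduct_balancingMatrix_mulVec_const (s : V → V → ℝ) (a : ℝ) :
    (fun _ => a) ⬝ᵥ G.balancingMatrix s *ᵥ (fun _ => a) =
      a ^ 2 * ∑ i, ∑ j ∈ G.neighborFinset i, (cos (s i j) - 1) / sin (s i j) := by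
  simp only [dotProduct, balancingMatrix_mulVec_apply, mul_sum]
  exact sum_congr rfl fun i _ => sum_congr rfl fun j _ => by ring

variable {G}

theorem balancingMatrix_mulVec_eq_zero_iff {s : V → V → ℝ} {ρ : V → ℝ} :
    G.balancingMatrix s *ᵥ ρ = 0 ↔
      ∀ i, ∑ j ∈ G.neighborFinset i, (ρ j - cos (s i j) * ρ i) / sin (s i j) = 0 := by
  simp only [funext_iff, Pi.zero_apply, balancingMatrix_mulVec_apply]
  refine forall_congr' fun i => ?_
  rw [← neg_eq_zero, ← sum_neg_distrib]
  simp only [← neg_div, neg_sub]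

theorem const_dotProduct_balancingMatrix_mulVec_const_neg {s : V → V → ℝ}
    (hs : ∀ i j, G.Adj i j → s i j ∈ Set.Ioo 0 π) {i₀ j₀ : V} (hadj : G.Adj i₀ j₀) {a : ℝ}
    (ha : a ≠ 0) : (fun _ => a) ⬝ᵥ G.balancingMatrix s *ᵥ (fun _ => a) < 0 := by
  have hterm : ∀ i j, G.Adj i j → (cos (s i j) - 1) / sin (s i j) < 0 := fun i j h => by
    obtain ⟨h0, hπ⟩ := hs i j h
    refine div_neg_of_neg_of_pos ?_ (sin_pos_of_pos_of_lt_pi h0 hπ)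
    linarith [cos_zero ▸ cos_lt_cos_of_nonneg_of_le_pi le_rfl hπ.le h0]
  rw [const_dotProduct_balancingMatrix_mulVec_const]
  refine mul_neg_of_pos_of_neg (by positivity) (sum_neg' (fun i _ => ?_) ⟨i₀, mem_univ _, ?_⟩)
  · exact sum_nonpos fun j hj => (hterm i j ((G.mem_neighborFinset i j).mp hj)).le
  · exact sum_neg (fun j hj => hterm i₀ j ((G.mem_neighborFinset i₀ j).mp hj)) ⟨j₀, by simpa⟩

end SimpleGraph

section NormalizedLaplacian

open SimpleGraph

variable {n : ℕ} {G : SimpleGraph (Fin n)} [DecidableRel G.Adj]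

theorem normLap_eq_diagonal_mul_lapMatrix_mul (hdeg : ∀ i, 0 < G.degree i) :
    normLap n G = diagonal (fun i => (√(G.degree i : ℝ))⁻¹) * G.lapMatrix ℝ *
      diagonal (fun i => (√(G.degree i : ℝ))⁻¹) := by
  ext i j
  have hd : ∀ k, (0 : ℝ) < G.degree k := fun k => by exact_mod_cast hdeg k
  simp only [normLap, diagonal_mul, mul_diagonal, lapMatrix, Matrix.sub_apply, degMatrix,
    diagonal_apply, adjMatrix_apply]
  split_ifs with hij hadj hadj'
  · subst hij
    exact (G.irrefl hadj).elim
  · subst hij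
    rw [sub_zero, mul_right_comm, ← mul_inv, mul_self_sqrt (hd i).le, inv_mul_cancel₀ (hd i).ne']
  · rw [sqrt_mul (hd i).le]
    ring
  · simp

theorem posSemidef_normLap (hdeg : ∀ i, 0 < G.degree i) : (normLap n G).PosSemidef := by
  rw [normLap_eq_diagonal_mul_lapMatrix_mul hdeg]
  simpa using (G.posSemidef_lapMatrix ℝ).conjTranspose_mul_mul_same
    (diagonal (fun i => (√(G.degree i : ℝ))⁻¹))

theorem exists_eq_mul_sqrt_degree_of_normLap_mulVec_eq_zero (hconn : G.Connected)
    (hdeg : ∀ i, 0 < G.degree i) {y : Fin n → ℝ} (hy : normLap n G *ᵥ y = 0) :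
    ∃ c : ℝ, ∀ i, y i = c * √(G.degree i : ℝ) := by
  have hd : ∀ k, (0 : ℝ) < √(G.degree k : ℝ) := fun k => sqrt_pos.2 (by exact_mod_cast hdeg k)
  set Dinv := diagonal fun i => (√(G.degree i : ℝ))⁻¹
  have hL : G.lapMatrix ℝ *ᵥ (Dinv *ᵥ y) = 0 := by
    rw [normLap_eq_diagonal_mul_lapMatrix_mul hdeg, ← mulVec_mulVec, ← mulVec_mulVec] at hy
    funext i
    simpa [mulVec_diagonal, (hd i).ne'] using congrFun hy i
  rw [G.lapMatrix_mulVec_eq_zero_iff_forall_reachable] at hL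
  obtain ⟨i₀⟩ := hconn.nonempty
  refine ⟨(Dinv *ᵥ y) i₀, fun i => ?_⟩
  rw [← hL i i₀ (hconn.preconnected i i₀)]
  simp only [Dinv, mulVec_diagonal]
  field_simp [(hd i).ne']

theorem mul_dotProduct_degMatrix_le_dotProduct_lapMatrix (hconn : G.Connected)
    (hdeg : ∀ i, 0 < G.degree i) {lam : ℝ}
    (hlam : ∀ μ : ℝ, 0 < μ →
      (∃ v : Fin n → ℝ, v ≠ 0 ∧ (normLap n G).mulVec v = μ • v) → lam ≤ μ)
    {v : Fin n → ℝ} (hv : ∑ i, (G.degree i : ℝ) * v i = 0) :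
    lam * (v ⬝ᵥ G.degMatrix ℝ *ᵥ v) ≤ v ⬝ᵥ G.lapMatrix ℝ *ᵥ v := by
  have hd : ∀ k, (0 : ℝ) < G.degree k := fun k => by exact_mod_cast hdeg k
  have hN := normLap_eq_diagonal_mul_lapMatrix_mul hdeg
  set D := diagonal fun i => √(G.degree i : ℝ)
  set Dinv := diagonal fun i => (√(G.degree i : ℝ))⁻¹
  have hDinvD : Dinv * D = 1 := by
    simp [D, Dinv, diagonal_mul_diagonal, (sqrt_pos.2 (hd _)).ne']
  have hDdot : ∀ u w, (D *ᵥ u) ⬝ᵥ Dinv *ᵥ w = u ⬝ᵥ w := fun u w => by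
    simp only [dotProduct, D, Dinv, mulVec_diagonal]
    exact sum_congr rfl fun i _ => by field_simp [(sqrt_pos.2 (hd i)).ne']
  have hker : ∀ y, normLap n G *ᵥ y = 0 → y ⬝ᵥ D *ᵥ v = 0 := by
    intro y hy
    obtain ⟨c, hc⟩ := exists_eq_mul_sqrt_degree_of_normLap_mulVec_eq_zero hconn hdeg hy
    calc y ⬝ᵥ D *ᵥ v = ∑ i, c * ((G.degree i : ℝ) * v i) := by
          simp only [dotProduct, D, mulVec_diagonal, hc]
          exact sum_congr rfl fun i _ => by
            linear_combination (c * v i) * mul_self_sqrt (hd i).le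
      _ = 0 := by rw [← mul_sum, hv, mul_zero]
  have hNDv : normLap n G *ᵥ (D *ᵥ v) = Dinv *ᵥ (G.lapMatrix ℝ *ᵥ v) := by
    rw [hN, mulVec_mulVec, mulVec_mulVec, mul_assoc _ Dinv, hDinvD, mul_one]
  have hDv : (D *ᵥ v) ⬝ᵥ (D *ᵥ v) = v ⬝ᵥ G.degMatrix ℝ *ᵥ v := by
    rw [dotProduct_mulVec_degMatrix]
    simp only [dotProduct, D, mulVec_diagonal]
    exact sum_congr rfl fun i _ => by
      linear_combination (v i * v i) * mul_self_sqrt (hd i).le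
  simpa only [hNDv, hDdot, hDv] using (posSemidef_normLap hdeg).mul_dotProduct_self_le hlam hker

theorem mul_dotProduct_degMatrix_le_dotProduct_balancingMatrix (hconn : G.Connected)
    (hdeg : ∀ i, 0 < G.degree i) {s : Fin n → Fin n → ℝ} (hs : ∀ i j, s i j = s j i) {σ lam : ℝ}
    (hsσ : ∀ i j, G.Adj i j → 0 < s i j ∧ s i j ≤ σ) (hσ : σ ∈ Set.Ioo 0 π)
    (hlam : ∀ μ : ℝ, 0 < μ →
      (∃ v : Fin n → ℝ, v ≠ 0 ∧ (normLap n G).mulVec v = μ • v) → lam ≤ μ)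
    {v : Fin n → ℝ} (hv : ∑ i, (G.degree i : ℝ) * v i = 0) :
    (sin σ)⁻¹ * (lam - (1 - cos σ)) * (v ⬝ᵥ G.degMatrix ℝ *ᵥ v) ≤
      v ⬝ᵥ G.balancingMatrix s *ᵥ v :=
  calc (sin σ)⁻¹ * (lam - (1 - cos σ)) * (v ⬝ᵥ G.degMatrix ℝ *ᵥ v)
      ≤ (sin σ)⁻¹ * (v ⬝ᵥ G.lapMatrix ℝ *ᵥ v - (1 - cos σ) * (v ⬝ᵥ G.degMatrix ℝ *ᵥ v)) := by
        rw [mul_assoc, sub_mul]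
        gcongr
        · exact (inv_pos.2 (sin_pos_of_pos_of_lt_pi hσ.1 hσ.2)).le
        · exact mul_dotProduct_degMatrix_le_dotProduct_lapMatrix hconn hdeg hlam hv
    _ = v ⬝ᵥ G.balancingMatrix (fun _ _ => σ) *ᵥ v := by
        rw [balancingMatrix_const, smul_mulVec, sub_mulVec, smul_mulVec, dotProduct_smul,
          dotProduct_sub, dotProduct_smul, smul_eq_mul, smul_eq_mul]
    _ ≤ v ⬝ᵥ G.balancingMatrix s *ᵥ v :=
        dotProduct_balancingMatrix_mulVec_le_of_le hs (fun _ _ => rfl) (fun i j h =>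
          ⟨⟨(hsσ i j h).1, (hsσ i j h).2.trans_lt hσ.2⟩, hσ, (hsσ i j h).2⟩) v

theorem eq_zero_of_balancingMatrix_mulVec_eq_zero (hconn : G.Connected)
    (hdeg : ∀ i, 0 < G.degree i) {s : Fin n → Fin n → ℝ} (hs : ∀ i j, s i j = s j i) {σ lam : ℝ}
    (hsσ : ∀ i j, G.Adj i j → 0 < s i j ∧ s i j ≤ σ) (hσ : σ ∈ Set.Ioo 0 π)
    (hgap : 1 - cos σ < lam)
    (hlam : ∀ μ : ℝ, 0 < μ →
      (∃ v : Fin n → ℝ, v ≠ 0 ∧ (normLap n G).mulVec v = μ • v) → lam ≤ μ)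
    {ρ : Fin n → ℝ} (hρ : G.balancingMatrix s *ᵥ ρ = 0) : ρ = 0 := by
  by_contra hρ0
  obtain ⟨i₀, -⟩ := Function.ne_iff.mp hρ0
  obtain ⟨j₀, hadj⟩ := (G.degree_pos_iff_exists_adj i₀).mp (hdeg i₀)
  have hd : ∀ i, (0 : ℝ) < G.degree i := fun i => by exact_mod_cast hdeg i
  set c := (∑ i, (G.degree i : ℝ) * ρ i) / ∑ i, (G.degree i : ℝ)
  set v := ρ + fun _ => -c
  have hv : ∑ i, (G.degree i : ℝ) * v i = 0 := by
    have : (∑ i, (G.degree i : ℝ)) ≠ 0 := (sum_pos (fun i _ => hd i) ⟨i₀, mem_univ _⟩).ne'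
    simp only [v, Pi.add_apply, mul_add, sum_add_distrib, ← sum_mul, c]
    field_simp
    ring
  have hlower :=
    mul_dotProduct_degMatrix_le_dotProduct_balancingMatrix hconn hdeg hs hsσ hσ hlam hv
  have hκ : 0 < (sin σ)⁻¹ * (lam - (1 - cos σ)) :=
    mul_pos (inv_pos.2 (sin_pos_of_pos_of_lt_pi hσ.1 hσ.2)) (by linarith)
  have hshift := (isSymm_balancingMatrix hs).dotProduct_mulVec_add_of_mulVec_eq_zero hρ
    (fun _ => -c)
  by_cases hc : c = 0
  · have hpos : 0 < ρ ⬝ᵥ G.degMatrix ℝ *ᵥ ρ := by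
      simpa [degMatrix] using (PosDef.diagonal hd).dotProduct_mulVec_pos hρ0
    have hv0 : v = ρ := by simp only [v, hc, neg_zero]; exact add_zero ρ
    rw [hv0, hρ, dotProduct_zero] at hlower
    nlinarith
  · have hneg := const_dotProduct_balancingMatrix_mulVec_const_neg
      (fun i j h => ⟨(hsσ i j h).1, (hsσ i j h).2.trans_lt hσ.2⟩) hadj (neg_ne_zero.mpr hc)
    have hnonneg : 0 ≤ v ⬝ᵥ G.degMatrix ℝ *ᵥ v := by
      simpa [degMatrix] using
        (posSemidef_diagonal_iff.2 fun i => (hd i).le).dotProduct_mulVec_nonneg v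
    rw [← hshift] at hneg
    nlinarith

end NormalizedLaplacian

theorem stmt_7_general (n : ℕ) (G : SimpleGraph (Fin n)) [DecidableRel G.Adj]
    (hconn : G.Connected)
    (θ : Fin n → Fin n → ℝ) (hsym : ∀ i j, θ i j = θ j i)
    (hrange : ∀ i j, G.Adj i j → θ i j ∈ Set.Ioo (0 : ℝ) Real.pi)
    (θmax : ℝ) (hmax : IsGreatest {t : ℝ | ∃ i j, G.Adj i j ∧ θ i j = t} θmax)
    (lam₁ : ℝ)
    (hlam_min : ∀ μ : ℝ, 0 < μ →
      (∃ v : Fin n → ℝ, v ≠ 0 ∧ (normLap n G).mulVec v = μ • v) → lam₁ ≤ μ)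
    (α : ℝ) (hα : 0 < α)
    (ρ : Fin n → ℝ) (hρ : ρ ≠ 0)
    (hbal : ∀ i, ∑ j ∈ G.neighborFinset i,
        (ρ j - Real.cos (α * θ i j) * ρ i) / Real.sin (α * θ i j) = 0) :
    Real.arccos (1 - lam₁) / θmax ≤ α := by
  obtain ⟨⟨i₀, j₀, hadj, rfl⟩, hθmax⟩ := hmax
  have : Nontrivial (Fin n) := nontrivial_of_ne i₀ j₀ hadj.ne
  by_contra! hlt
  set σ := α * θ i₀ j₀
  have hσ : σ < arccos (1 - lam₁) := (lt_div_iff₀ (hrange i₀ j₀ hadj).1).mp hlt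
  have hσ0 : 0 < σ := mul_pos hα (hrange i₀ j₀ hadj).1
  have hgap : 1 - cos σ < lam₁ := by linarith [lt_cos_of_lt_arccos hσ0.le hσ]
  have hangles : ∀ i j, G.Adj i j → 0 < α * θ i j ∧ α * θ i j ≤ σ := fun i j h =>
    ⟨mul_pos hα (hrange i j h).1, mul_le_mul_of_nonneg_left (hθmax ⟨i, j, h, rfl⟩) hα.le⟩
  exact hρ (eq_zero_of_balancingMatrix_mulVec_eq_zero hconn
    (fun i => hconn.preconnected.degree_pos_of_nontrivial i) (fun i j => by rw [hsym])
    hangles ⟨hσ0, hσ.trans_le (arccos_le_pi _)⟩ hgap hlam_min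
    (SimpleGraph.balancingMatrix_mulVec_eq_zero_iff.mpr hbal))

/-- If `G` is connected, not complete, with edge weights `θᵢⱼ ∈ (0,π)`, `λ₁` is
the smallest positive eigenvalue of the normalized Laplacian, and some nonzero
`ρ` satisfies the balancing conditions for a nonsingular degree `α > 0`, then
`α ≥ arccos(1 - λ₁)/θ_max`. -/
theorem stmt_7 (n : ℕ) (hn : 2 ≤ n) (G : SimpleGraph (Fin n)) [DecidableRel G.Adj]
    (hconn : G.Connected) (hncomplete : G ≠ ⊤)
    (θ : Fin n → Fin n → ℝ) (hsym : ∀ i j, θ i j = θ j i)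
    (hrange : ∀ i j, G.Adj i j → θ i j ∈ Set.Ioo (0 : ℝ) Real.pi)
    (θmax : ℝ) (hmax : IsGreatest {t : ℝ | ∃ i j, G.Adj i j ∧ θ i j = t} θmax)
    (lam₁ : ℝ) (hlam_pos : 0 < lam₁)
    (hlam_ev : ∃ v : Fin n → ℝ, v ≠ 0 ∧ (normLap n G).mulVec v = lam₁ • v)
    (hlam_min : ∀ μ : ℝ, 0 < μ →
      (∃ v : Fin n → ℝ, v ≠ 0 ∧ (normLap n G).mulVec v = μ • v) → lam₁ ≤ μ)
    (α : ℝ) (hα : 0 < α)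
    (hns : ∀ i j, G.Adj i j → Real.sin (α * θ i j) ≠ 0)
    (ρ : Fin n → ℝ) (hρ : ρ ≠ 0)
    (hbal : ∀ i, ∑ j ∈ G.neighborFinset i,
        (ρ j - Real.cos (α * θ i j) * ρ i) / Real.sin (α * θ i j) = 0) :
    Real.arccos (1 - lam₁) / θmax ≤ α :=
  stmt_7_general n G hconn θ hsym hrange θmax hmax lam₁ hlam_min α hα ρ hρ hbal
end

section
/- Let G = K_n be the complete graph on n ≥ 2 vertices, with edge weights θ_{ij} = θ_{ji} ∈ (0, π) on adjacent pairs, and set θ_max = max over edges of θ_{ij}. Suppose α > 0 is such that sin(αθ_{ij}) ≠ 0 for all edges and there exists a nonzero vector ρ : V(G) → ℝ satisfying, for every vertex i, Σ_{j ≠ i} (ρ_j − cos(αθ_{ij})·ρ_i)/sin(αθ_{ij}) = 0. Then α ≥ (2/θ_max)·arctan(n/(n−1)). -/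
/-!
With `s = tan (t / 2)` one has `cos t = 1 - s sin t`, so the balancing condition at `i` becomes
`∑ⱼ (ρⱼ - ρᵢ) / sin tᵢⱼ + pᵢ ρᵢ = 0` with `pᵢ = ∑ⱼ tan (tᵢⱼ / 2)`, where `tᵢⱼ = α θᵢⱼ`.
If `α θ_max < 2 arctan (n / (n - 1))`, every `tᵢⱼ` lies in `(0, π)`, the conductances
`1 / sin tᵢⱼ` are at least `1`, and `0 < pᵢ < (n - 1) · n / (n - 1) = n`.
Summing the equations gives `∑ pᵢ ρᵢ = 0`; pairing them with `ρ` and comparing with the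
Laplacian of `K_n` gives `∑ pᵢ ρᵢ² = ½ ∑ (ρᵢ - ρⱼ)² / sin tᵢⱼ ≥ n ∑ ρᵢ² - (∑ ρᵢ)²`.
For the positive weights `wᵢ = n - pᵢ` this says `∑ wᵢ ρᵢ² ≤ (∑ ρᵢ)² = (∑ wᵢ ρᵢ)² / n²`,
while Cauchy–Schwarz gives `(∑ wᵢ ρᵢ)² ≤ (n² - ∑ pᵢ) ∑ wᵢ ρᵢ²`; hence `ρ = 0`.
-/

open Finset Real

theorem Real.cos_eq_one_sub_tan_half_mul_sin {t : ℝ} (h : cos (t / 2) ≠ 0) :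
    cos t = 1 - tan (t / 2) * sin t := by
  obtain ⟨x, rfl⟩ : ∃ x, t = 2 * x := ⟨t / 2, by ring⟩
  rw [mul_div_cancel_left₀ x two_ne_zero] at h ⊢
  rw [sin_two_mul, cos_two_mul', tan_eq_sin_div_cos]
  field_simp
  linear_combination sin_sq_add_cos_sq x

theorem Real.div_sin_eq_sub_div_sin_add_tan_half {t : ℝ} (ht₀ : 0 < t) (htπ : t < π) (x y : ℝ) :
    (y - cos t * x) / sin t = 1 / sin t * (y - x) + tan (t / 2) * x := by
  rw [cos_eq_one_sub_tan_half_mul_sin (cos_pos_of_mem_Ioo ⟨by linarith, by linarith⟩).ne']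
  field_simp [(sin_pos_of_pos_of_lt_pi ht₀ htπ).ne']
  ring

theorem Real.tan_mem_Ioo_of_mem_Ioo_arctan {x K : ℝ} (hx : x ∈ Set.Ioo 0 (arctan K)) :
    tan x ∈ Set.Ioo 0 K := by
  have hx_lt := hx.2.trans (arctan_lt_pi_div_two K)
  refine ⟨tan_pos_of_pos_of_lt_pi_div_two hx.1 hx_lt, arctan_lt_arctan_iff.mp ?_⟩
  rw [arctan_tan (by linarith [hx.1, pi_pos]) hx_lt]
  exact hx.2

section Balanced

variable {ι : Type*} [Fintype ι]

theorem eq_zero_of_sum_mul_eq_zero_of_le_sum_mul_sq {p ρ : ι → ℝ}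
    (hp : ∀ i, p i < Fintype.card ι) (hp_sum : 0 < ∑ i, p i) (h₁ : ∑ i, p i * ρ i = 0)
    (h₂ : Fintype.card ι * ∑ i, ρ i ^ 2 - (∑ i, ρ i) ^ 2 ≤ ∑ i, p i * ρ i ^ 2) : ρ = 0 := by
  by_contra hρ
  obtain ⟨k, hk⟩ := Function.ne_iff.mp hρ
  set n : ℝ := (Fintype.card ι : ℝ)
  have hw : ∀ i, 0 < n - p i := fun i => sub_pos.mpr (hp i)
  have hX : 0 < ∑ i, (n - p i) * ρ i ^ 2 :=
    sum_pos' (fun i _ => mul_nonneg (hw i).le (sq_nonneg _))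
      ⟨k, mem_univ k, mul_pos (hw k) (sq_pos_of_ne_zero hk)⟩
  have hwρ : ∑ i, (n - p i) * ρ i = n * ∑ i, ρ i := by
    simp only [sub_mul, sum_sub_distrib, h₁, mul_sum, sub_zero]
  have hCS : (∑ i, (n - p i) * ρ i) ^ 2 ≤ (∑ i, (n - p i)) * ∑ i, (n - p i) * ρ i ^ 2 :=
    sum_sq_le_sum_mul_sum_of_sq_le_mul _ (fun i _ => (hw i).le)
      (fun i _ => mul_nonneg (hw i).le (sq_nonneg _)) (fun i _ => le_of_eq (by ring))
  have hw_sum : ∑ i, (n - p i) = n * n - ∑ i, p i := by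
    simp [sum_sub_distrib, n]
  have hX_le : ∑ i, (n - p i) * ρ i ^ 2 ≤ (∑ i, ρ i) ^ 2 := by
    simp only [sub_mul, sum_sub_distrib, ← mul_sum]
    linarith
  rw [hwρ, hw_sum] at hCS
  nlinarith [mul_pos hp_sum hX]

variable [DecidableEq ι]

theorem sum_sum_erase_comm {M : Type*} [AddCommMonoid M] (F : ι → ι → M) :
    ∑ i, ∑ j ∈ univ.erase i, F i j = ∑ i, ∑ j ∈ univ.erase i, F j i :=
  sum_comm' fun i j => by simp [ne_comm, and_comm]

theorem two_mul_sum_sum_erase (F : ι → ι → ℝ) :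
    2 * ∑ i, ∑ j ∈ univ.erase i, F i j = ∑ i, ∑ j ∈ univ.erase i, (F i j + F j i) := by
  rw [two_mul]
  nth_rewrite 2 [sum_sum_erase_comm]
  simp only [sum_add_distrib]

theorem sum_sum_erase_sub_sq (ρ : ι → ℝ) :
    ∑ i, ∑ j ∈ univ.erase i, (ρ i - ρ j) ^ 2 =
      2 * (Fintype.card ι * ∑ i, ρ i ^ 2 - (∑ i, ρ i) ^ 2) := by
  simp only [fun i => sum_erase (f := fun j => (ρ i - ρ j) ^ 2) univ (by simp : (ρ i - ρ i) ^ 2 = 0)]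
  simp only [sub_sq, sum_add_distrib, sum_sub_distrib, sum_const, card_univ, nsmul_eq_mul,
    ← mul_sum, ← sum_mul]
  ring

variable {c : ι → ι → ℝ} {p ρ : ι → ℝ}

theorem sum_mul_eq_zero_of_balanced (hc : ∀ i j, c i j = c j i)
    (hbal : ∀ i, ∑ j ∈ univ.erase i, c i j * (ρ j - ρ i) + p i * ρ i = 0) :
    ∑ i, p i * ρ i = 0 := by
  have hflux : ∑ i, ∑ j ∈ univ.erase i, c i j * (ρ j - ρ i) = 0 := by
    have h := two_mul_sum_sum_erase fun i j => c i j * (ρ j - ρ i)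
    have hpair : ∀ i j, c i j * (ρ j - ρ i) + c j i * (ρ i - ρ j) = 0 := by
      intro i j; rw [hc j i]; ring
    simp only [hpair, sum_const_zero] at h
    linarith
  have h := sum_eq_zero fun i (_ : i ∈ univ) => hbal i
  rwa [sum_add_distrib, hflux, zero_add] at h

theorem two_mul_sum_mul_sq_of_balanced (hc : ∀ i j, c i j = c j i)
    (hbal : ∀ i, ∑ j ∈ univ.erase i, c i j * (ρ j - ρ i) + p i * ρ i = 0) :
    2 * ∑ i, p i * ρ i ^ 2 = ∑ i, ∑ j ∈ univ.erase i, c i j * (ρ i - ρ j) ^ 2 := by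
  have h := two_mul_sum_sum_erase fun i j => ρ i * (c i j * (ρ j - ρ i))
  have hpair : ∀ i j, ρ i * (c i j * (ρ j - ρ i)) + ρ j * (c j i * (ρ i - ρ j)) =
      -(c i j * (ρ i - ρ j) ^ 2) := by
    intro i j; rw [hc j i]; ring
  have henergy : ∑ i, ∑ j ∈ univ.erase i, ρ i * (c i j * (ρ j - ρ i)) + ∑ i, p i * ρ i ^ 2 = 0 := by
    rw [← sum_add_distrib]
    refine sum_eq_zero fun i _ => ?_
    rw [← mul_sum]
    linear_combination ρ i * hbal i
  simp only [hpair, sum_neg_distrib] at h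
  linarith

theorem eq_zero_of_balanced (hc : ∀ i j, c i j = c j i) (hc_one : ∀ i j, i ≠ j → 1 ≤ c i j)
    (hp : ∀ i, p i < Fintype.card ι) (hp_sum : 0 < ∑ i, p i)
    (hbal : ∀ i, ∑ j ∈ univ.erase i, c i j * (ρ j - ρ i) + p i * ρ i = 0) : ρ = 0 := by
  refine eq_zero_of_sum_mul_eq_zero_of_le_sum_mul_sq hp hp_sum
    (sum_mul_eq_zero_of_balanced hc hbal) ?_
  have hdir : ∑ i, ∑ j ∈ univ.erase i, (ρ i - ρ j) ^ 2 ≤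
      ∑ i, ∑ j ∈ univ.erase i, c i j * (ρ i - ρ j) ^ 2 :=
    sum_le_sum fun i _ => sum_le_sum fun j hj =>
      le_mul_of_one_le_left (sq_nonneg _) (hc_one i j (ne_of_mem_erase hj).symm)
  rw [sum_sum_erase_sub_sq, ← two_mul_sum_mul_sq_of_balanced hc hbal] at hdir
  linarith

theorem eq_zero_of_balanced_of_lt_two_mul_arctan [Nontrivial ι] {t : ι → ι → ℝ}
    (ht : ∀ i j, t i j = t j i)
    (ht_mem : ∀ i j, i ≠ j →
      t i j ∈ Set.Ioo 0 (2 * arctan (Fintype.card ι / (Fintype.card ι - 1))))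
    (hbal : ∀ i, ∑ j ∈ univ.erase i, (ρ j - cos (t i j) * ρ i) / sin (t i j) = 0) : ρ = 0 := by
  set n : ℝ := (Fintype.card ι : ℝ)
  have hn : (1 : ℝ) < n := Nat.one_lt_cast.mpr Fintype.one_lt_card
  have hpos : ∀ i j, i ≠ j → 0 < t i j := fun i j hij => (ht_mem i j hij).1
  have hlt_pi : ∀ i j, i ≠ j → t i j < π := fun i j hij => by
    linarith [(ht_mem i j hij).2, arctan_lt_pi_div_two (n / (n - 1))]
  have htan : ∀ i j, i ≠ j → tan (t i j / 2) ∈ Set.Ioo 0 (n / (n - 1)) := fun i j hij =>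
    tan_mem_Ioo_of_mem_Ioo_arctan ⟨by linarith [hpos i j hij], by linarith [(ht_mem i j hij).2]⟩
  have hne : ∀ i : ι, (univ.erase i).Nonempty := fun i => univ_nontrivial.erase_nonempty
  refine eq_zero_of_balanced (c := fun i j => 1 / sin (t i j))
    (p := fun i => ∑ j ∈ univ.erase i, tan (t i j / 2)) (fun i j => by rw [ht]) ?_ ?_ ?_ ?_
  · exact fun i j hij =>
      one_le_one_div (sin_pos_of_pos_of_lt_pi (hpos i j hij) (hlt_pi i j hij)) (sin_le_one _)
  · intro i
    calc ∑ j ∈ univ.erase i, tan (t i j / 2) < ∑ _j ∈ univ.erase i, n / (n - 1) :=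
          sum_lt_sum_of_nonempty (hne i) fun j hj => (htan i j (ne_of_mem_erase hj).symm).2
      _ = n := by
          rw [sum_const, card_erase_of_mem (mem_univ i), card_univ, nsmul_eq_mul,
            Nat.cast_pred Fintype.card_pos]
          exact mul_div_cancel₀ _ (by linarith)
  · exact sum_pos (fun i _ => sum_pos (fun j hj => (htan i j (ne_of_mem_erase hj).symm).1) (hne i))
      univ_nonempty
  · intro i
    rw [sum_mul, ← sum_add_distrib, ← hbal i]
    refine sum_congr rfl fun j hj => ?_
    have hij := (ne_of_mem_erase hj).symm
    exact (div_sin_eq_sub_div_sin_add_tan_half (hpos i j hij) (hlt_pi i j hij) _ _).symm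

end Balanced

theorem stmt_8_general (n : ℕ) (hn : 2 ≤ n) (θ : Fin n → Fin n → ℝ)
    (hsym : ∀ i j, θ i j = θ j i)
    (hrange : ∀ i j, i ≠ j → θ i j ∈ Set.Ioo (0 : ℝ) Real.pi)
    (θmax : ℝ) (hmax : IsGreatest {t : ℝ | ∃ i j, i ≠ j ∧ θ i j = t} θmax)
    (α : ℝ) (hα : 0 < α)
    (ρ : Fin n → ℝ) (hρ : ρ ≠ 0)
    (hbal : ∀ i, ∑ j ∈ Finset.univ.erase i,
        (ρ j - Real.cos (α * θ i j) * ρ i) / Real.sin (α * θ i j) = 0) :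
    (2 / θmax) * Real.arctan ((n : ℝ) / ((n : ℝ) - 1)) ≤ α := by
  by_contra! hlt
  obtain ⟨i₀, j₀, h₀, rfl⟩ := hmax.1
  rw [div_mul_eq_mul_div, lt_div_iff₀ (hrange i₀ j₀ h₀).1] at hlt
  have : Nontrivial (Fin n) := Fin.nontrivial_iff_two_le.mpr hn
  refine hρ (eq_zero_of_balanced_of_lt_two_mul_arctan (t := fun i j => α * θ i j)
    (fun i j => by rw [hsym]) (fun i j hij => ⟨mul_pos hα (hrange i j hij).1, ?_⟩) hbal)
  rw [Fintype.card_fin]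
  nlinarith [hmax.2 ⟨i, j, hij, rfl⟩]

/-- For the complete graph `K_n` (every pair of distinct vertices adjacent)
with edge weights `θᵢⱼ ∈ (0,π)`: if some nonzero `ρ` satisfies the balancing
conditions for a nonsingular degree `α > 0`, then
`α ≥ (2/θ_max)·arctan(n/(n-1))`. -/
theorem stmt_8 (n : ℕ) (hn : 2 ≤ n) (θ : Fin n → Fin n → ℝ)
    (hsym : ∀ i j, θ i j = θ j i)
    (hrange : ∀ i j, i ≠ j → θ i j ∈ Set.Ioo (0 : ℝ) Real.pi)
    (θmax : ℝ) (hmax : IsGreatest {t : ℝ | ∃ i j, i ≠ j ∧ θ i j = t} θmax)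
    (α : ℝ) (hα : 0 < α)
    (hns : ∀ i j, i ≠ j → Real.sin (α * θ i j) ≠ 0)
    (ρ : Fin n → ℝ) (hρ : ρ ≠ 0)
    (hbal : ∀ i, ∑ j ∈ Finset.univ.erase i,
        (ρ j - Real.cos (α * θ i j) * ρ i) / Real.sin (α * θ i j) = 0) :
    (2 / θmax) * Real.arctan ((n : ℝ) / ((n : ℝ) - 1)) ≤ α :=
  stmt_8_general n hn θ hsym hrange θmax hmax α hα ρ hρ hbal
end

section
/- Fix p > 1 and define F(α) = (α − 1)/√(α² + ((2−p)/(p−1))·α) for α in the set S = {α ∈ ℝ : α > 0 and α > (p−2)/(p−1)}. Then F is strictly increasing on S. Consequently, if θ₀ and θ₁ in (0, 2π) are related to degrees α₀, α₁ ∈ S by 1 − θᵢ/π = F(αᵢ), then θ₀ < θ₁ implies α₀ > α₁. -/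
lemma key_mono (c x y : ℝ) (hc : 0 < c + 1) (hx0 : 0 < x) (hxc : 0 < x + c)
    (hy0 : 0 < y) (hyc : 0 < y + c) (hxy : x < y) :
    (x - 1) / Real.sqrt (x ^ 2 + c * x) < (y - 1) / Real.sqrt (y ^ 2 + c * y) := by
  have hQx : 0 < x ^ 2 + c * x := by nlinarith [mul_pos hx0 hxc]
  have hQy : 0 < y ^ 2 + c * y := by nlinarith [mul_pos hy0 hyc]
  have ha : 0 < Real.sqrt (x ^ 2 + c * x) := Real.sqrt_pos.2 hQx
  have hb : 0 < Real.sqrt (y ^ 2 + c * y) := Real.sqrt_pos.2 hQy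
  set a := Real.sqrt (x ^ 2 + c * x) with ha_def
  set b := Real.sqrt (y ^ 2 + c * y) with hb_def
  have ha2 : a ^ 2 = x ^ 2 + c * x := Real.sq_sqrt hQx.le
  have hb2 : b ^ 2 = y ^ 2 + c * y := Real.sq_sqrt hQy.le
  rw [div_lt_div_iff₀ ha hb]
  rcases le_or_gt 1 x with hx1 | hx1
  · -- both numerators nonnegative
    have hy1 : 1 < y := lt_of_le_of_lt hx1 hxy
    have hg : 0 < (c + 1) * (x * y - 1) + (x - 1) * (y - 1) := by
      have h1 : 1 < x * y := by nlinarith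
      have h2 : 0 ≤ (x - 1) * (y - 1) := by nlinarith
      nlinarith [mul_pos hc (sub_pos.2 h1)]
    have hsq : ((x - 1) * b) ^ 2 < ((y - 1) * a) ^ 2 := by
      have : ((x - 1) * b) ^ 2 = (x - 1) ^ 2 * (y ^ 2 + c * y) := by
        rw [mul_pow, hb2]
      rw [this]
      have : ((y - 1) * a) ^ 2 = (y - 1) ^ 2 * (x ^ 2 + c * x) := by
        rw [mul_pow, ha2]
      rw [this]
      nlinarith [mul_pos (sub_pos.2 hxy) hg]
    have hpos : 0 ≤ (y - 1) * a := mul_nonneg (by linarith) ha.le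
    exact lt_of_pow_lt_pow_left₀ 2 hpos hsq
  · rcases le_or_gt y 1 with hy1 | hy1
    · -- both numerators nonpositive
      have h1x : 0 < 1 - x := by linarith
      have h1xy : 0 < 1 - x * y := by nlinarith [mul_pos hy0 h1x]
      have hg : (1 - x) * (1 - y) < (c + 1) * (1 - x * y) := by
        nlinarith [mul_pos hxc h1xy, mul_pos hy0 (mul_pos h1x h1x)]
      have hsq : ((1 - y) * a) ^ 2 < ((1 - x) * b) ^ 2 := by
        have e1 : ((1 - y) * a) ^ 2 = (1 - y) ^ 2 * (x ^ 2 + c * x) := by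
          rw [mul_pow, ha2]
        have e2 : ((1 - x) * b) ^ 2 = (1 - x) ^ 2 * (y ^ 2 + c * y) := by
          rw [mul_pow, hb2]
        rw [e1, e2]
        nlinarith [mul_pos (sub_pos.2 hxy) (sub_pos.2 hg)]
      have hpos : 0 ≤ (1 - x) * b := by positivity
      have h2 : (1 - y) * a < (1 - x) * b := by
        have hpos' : 0 ≤ (1 - y) * a := by
          have : 0 ≤ 1 - y := by linarith
          positivity
        exact lt_of_pow_lt_pow_left₀ 2 hpos hsq
      nlinarith
    · -- x - 1 < 0 < y - 1
      have h1 : (x - 1) * b < 0 := mul_neg_of_neg_of_pos (by linarith) hb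
      have h2 : 0 < (y - 1) * a := mul_pos (by linarith) ha
      linarith

/-- For fixed `p > 1`, the function `F(α) = (α - 1)/√(α² + ((2-p)/(p-1))α)` is
strictly increasing on `S = {α | α > 0 ∧ α > (p-2)/(p-1)}`; consequently, if
angles `θ₀, θ₁ ∈ (0, 2π)` are related to degrees `α₀, α₁ ∈ S` by
`1 - θᵢ/π = F(αᵢ)`, then `θ₀ < θ₁` implies `α₀ > α₁`. -/
theorem stmt_13 (p : ℝ) (hp : 1 < p) :
    StrictMonoOn (fun α : ℝ =>
        (α - 1) / Real.sqrt (α ^ 2 + ((2 - p) / (p - 1)) * α))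
      {α : ℝ | 0 < α ∧ (p - 2) / (p - 1) < α} ∧
    (∀ θ₀ θ₁ α₀ α₁ : ℝ,
      θ₀ ∈ Set.Ioo (0 : ℝ) (2 * Real.pi) → θ₁ ∈ Set.Ioo (0 : ℝ) (2 * Real.pi) →
      α₀ ∈ {α : ℝ | 0 < α ∧ (p - 2) / (p - 1) < α} →
      α₁ ∈ {α : ℝ | 0 < α ∧ (p - 2) / (p - 1) < α} →
      1 - θ₀ / Real.pi = (α₀ - 1) / Real.sqrt (α₀ ^ 2 + ((2 - p) / (p - 1)) * α₀) →
      1 - θ₁ / Real.pi = (α₁ - 1) / Real.sqrt (α₁ ^ 2 + ((2 - p) / (p - 1)) * α₁) →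
      θ₀ < θ₁ → α₁ < α₀) := by
  have hp1 : 0 < p - 1 := by linarith
  set c : ℝ := (2 - p) / (p - 1) with hc_def
  have hc : 0 < c + 1 := by
    have h : (-1 : ℝ) < c := by rw [hc_def, lt_div_iff₀ hp1]; linarith
    linarith
  have hadd : ∀ α : ℝ, (p - 2) / (p - 1) < α → 0 < α + c := by
    intro α h
    have h2 : (p - 2) / (p - 1) + c = 0 := by
      rw [hc_def, ← add_div]
      norm_num
    linarith
  have hmono : StrictMonoOn (fun α : ℝ =>
      (α - 1) / Real.sqrt (α ^ 2 + c * α)) {α : ℝ | 0 < α ∧ (p - 2) / (p - 1) < α} := by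
    intro x hx y hy hxy
    exact key_mono c x y hc hx.1 (hadd x hx.2) hy.1 (hadd y hy.2) hxy
  refine ⟨hmono, ?_⟩
  intro θ₀ θ₁ α₀ α₁ hθ₀ hθ₁ hα₀ hα₁ h₀ h₁ hθ
  have hπ : 0 < Real.pi := Real.pi_pos
  have hdiv : θ₀ / Real.pi < θ₁ / Real.pi := by gcongr
  have hF : (fun α : ℝ => (α - 1) / Real.sqrt (α ^ 2 + c * α)) α₁ <
      (fun α : ℝ => (α - 1) / Real.sqrt (α ^ 2 + c * α)) α₀ := by
    simp only
    linarith
  exact (hmono.lt_iff_lt hα₁ hα₀).mp hF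
end

section
/- Let V and E be finite sets with maps t, h : E → V, let c : E → ℝ satisfy −1 < c(e) < 1 for every e ∈ E, and let νt, νh : E → ℝ satisfy, for every e ∈ E, νt(e) ≥ c(e)·νh(e) and νh(e) ≥ c(e)·νt(e). Suppose furthermore that for every vertex v ∈ V, Σ_{e : t e = v} νt(e) + Σ_{e : h e = v} νh(e) = 0. Then νt(e) = 0 and νh(e) = 0 for every e ∈ E. -/
open Finset

/-!
Along each edge, `(1 - c)(νt + νh) ≥ 0`, so the edge sums `νt + νh` are nonnegative. Summing the
balancing conditions over all vertices counts each edge once through each endpoint, so these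
nonnegative edge sums add up to zero and all vanish. With `νh = -νt` the two inequalities read
`(1 + c) νt ≥ 0` and `(1 + c) νh ≥ 0`, which forces both to be zero.
-/

section EdgeInequalities

variable {K : Type*} [Field K] [LinearOrder K] [IsStrictOrderedRing K] {c x y : K}

lemma add_nonneg_of_mul_le_of_mul_le (hc : c < 1) (hx : c * y ≤ x) (hy : c * x ≤ y) :
    0 ≤ x + y := by
  have h : c * (x + y) ≤ x + y := by linarith
  nlinarith

lemma eq_zero_of_add_eq_zero_of_mul_le (hc : -1 < c) (hx : c * y ≤ x) (hy : c * x ≤ y)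
    (hxy : x + y = 0) : x = 0 ∧ y = 0 := by
  obtain rfl : y = -x := by linear_combination hxy
  constructor <;> nlinarith

end EdgeInequalities

lemma sum_sum_filter_add_sum_filter {V E M : Type*} [Fintype V] [Fintype E] [DecidableEq V]
    [AddCommMonoid M] (t h : E → V) (a b : E → M) :
    ∑ v, ((∑ e ∈ univ.filter (fun e => t e = v), a e) +
        ∑ e ∈ univ.filter (fun e => h e = v), b e) = ∑ e, (a e + b e) := by
  rw [sum_add_distrib, sum_fiberwise, sum_fiberwise, sum_add_distrib]

/-- Nonexistence of nontrivial balanced data at the singular degree: if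
`-1 < c(e) < 1`, `νt(e) ≥ c(e)·νh(e)`, `νh(e) ≥ c(e)·νt(e)` for every oriented
edge `e`, and the balancing conditions
`∑_{t e = v} νt(e) + ∑_{h e = v} νh(e) = 0` hold at every vertex `v`,
then `νt ≡ 0` and `νh ≡ 0`. -/
theorem stmt_17 (V E : Type) [Fintype V] [Fintype E] [DecidableEq V]
    (t h : E → V) (c νt νh : E → ℝ)
    (hc : ∀ e, -1 < c e ∧ c e < 1)
    (h₁ : ∀ e, c e * νh e ≤ νt e)
    (h₂ : ∀ e, c e * νt e ≤ νh e)
    (hbal : ∀ v : V,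
      (∑ e ∈ Finset.univ.filter (fun e => t e = v), νt e) +
        (∑ e ∈ Finset.univ.filter (fun e => h e = v), νh e) = 0) :
    ∀ e, νt e = 0 ∧ νh e = 0 := by
  have hnonneg : ∀ e, 0 ≤ νt e + νh e := fun e =>
    add_nonneg_of_mul_le_of_mul_le (hc e).2 (h₁ e) (h₂ e)
  have htotal : ∑ e, (νt e + νh e) = 0 := by
    rw [← sum_sum_filter_add_sum_filter t h, sum_eq_zero fun v _ => hbal v]
  intro e
  have hedge : νt e + νh e = 0 :=
    (sum_eq_zero_iff_of_nonneg fun e _ => hnonneg e).mp htotal e (mem_univ e)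
  exact eq_zero_of_add_eq_zero_of_mul_le (hc e).1 (h₁ e) (h₂ e) hedge
end

section
/- Let V and E be finite sets with maps t, h : E → V, let θ : E → ℝ with θ(e) > 0 for all e, and let α > 0. For each e ∈ E let ρ_e : ℝ → ℝ be twice continuously differentiable with ρ_e''(x) = −α²·ρ_e(x) for all x ∈ [0, θ(e)]. Suppose the balancing condition holds at every vertex: for all v ∈ V, Σ_{e : t e = v} ρ_e'(0) − Σ_{e : h e = v} ρ_e'(θ(e)) = 0. Then Σ_{e ∈ E} ∫₀^{θ(e)} ρ_e(x) dx = 0. -/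
/-!
Integrating `ρₑ'' = -α² ρₑ` over `[0, θ(e)]` gives `-α² ∫ ρₑ = ρₑ'(θ(e)) - ρₑ'(0)`, so the total
integral is `-α⁻²` times `∑ₑ ρₑ'(θ(e)) - ∑ₑ ρₑ'(0)`. Grouping each of these two sums by the vertex
at which the slope is taken (the head, resp. the tail of `e`), the balancing condition says that
they agree vertex by vertex.
-/

open Finset

theorem integral_eq_div_of_deriv_deriv_eq_const_mul {f : ℝ → ℝ} (hf : ContDiff ℝ 2 f)
    {a b c : ℝ} (hc : c ≠ 0) (hode : ∀ x ∈ Set.uIcc a b, deriv (deriv f) x = c * f x) :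
    ∫ x in a..b, f x = (deriv f b - deriv f a) / c := by
  have hf' : Differentiable ℝ (deriv f) := (hf.iterate_deriv' 1 1).differentiable one_ne_zero
  have hf'' : Continuous (deriv (deriv f)) := (hf.iterate_deriv' 0 2).continuous
  have ftc : ∫ x in a..b, deriv (deriv f) x = deriv f b - deriv f a :=
    intervalIntegral.integral_deriv_eq_sub (fun x _ ↦ hf' x) (hf''.intervalIntegrable _ _)
  rw [intervalIntegral.integral_congr hode, intervalIntegral.integral_const_mul] at ftc
  rw [← ftc, mul_div_cancel_left₀ _ hc]

theorem sum_eq_sum_of_forall_sum_fiber_sub_sum_fiber_eq_zero {V E M : Type*} [Fintype E]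
    [DecidableEq V] [AddCommGroup M] (t h : E → V) (out inc : E → M)
    (hbal : ∀ v, ∑ e with t e = v, out e - ∑ e with h e = v, inc e = 0) :
    ∑ e, out e = ∑ e, inc e := by
  set vertices := univ.image t ∪ univ.image h
  rw [← sum_fiberwise_of_maps_to (t := vertices) (g := t) (by simp [vertices]),
    ← sum_fiberwise_of_maps_to (t := vertices) (g := h) (by simp [vertices])]
  exact sum_congr rfl fun v _ ↦ sub_eq_zero.mp (hbal v)

theorem stmt_18_general (V E : Type) [Fintype E] [DecidableEq V]
    (t h : E → V) (θ : E → ℝ) (hθ : ∀ e, 0 < θ e) (α : ℝ) (hα : 0 < α)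
    (ρ : E → ℝ → ℝ) (hreg : ∀ e, ContDiff ℝ 2 (ρ e))
    (hode : ∀ e, ∀ x ∈ Set.Icc (0 : ℝ) (θ e),
      deriv (deriv (ρ e)) x = -(α ^ 2) * ρ e x)
    (hbal : ∀ v : V,
      (∑ e ∈ Finset.univ.filter (fun e => t e = v), deriv (ρ e) 0) -
        (∑ e ∈ Finset.univ.filter (fun e => h e = v), deriv (ρ e) (θ e)) = 0) :
    ∑ e : E, ∫ x in (0 : ℝ)..(θ e), ρ e x = 0 := by
  have hα2 : -(α ^ 2) ≠ 0 := neg_ne_zero.mpr (pow_ne_zero 2 hα.ne')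
  have integral_eq (e : E) :
      ∫ x in (0 : ℝ)..(θ e), ρ e x = (deriv (ρ e) (θ e) - deriv (ρ e) 0) / -(α ^ 2) :=
    integral_eq_div_of_deriv_deriv_eq_const_mul (hreg e) hα2
      (by rw [Set.uIcc_of_le (hθ e).le]; exact hode e)
  have slopes : ∑ e, deriv (ρ e) 0 = ∑ e, deriv (ρ e) (θ e) :=
    sum_eq_sum_of_forall_sum_fiber_sub_sum_fiber_eq_zero t h _ _ hbal
  rw [sum_congr rfl fun e _ ↦ integral_eq e, ← sum_div, sum_sub_distrib, slopes, sub_self,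
    zero_div]

/-- The average of a balanced homogeneous harmonic function over a ball
centered at the cone vertex vanishes: if `ρₑ'' = -α²ρₑ` on `[0, θ(e)]` for each
edge `e` and the balancing conditions hold at every vertex, then
`∑_e ∫₀^{θ(e)} ρₑ = 0`. -/
theorem stmt_18 (V E : Type) [Fintype V] [Fintype E] [DecidableEq V]
    (t h : E → V) (θ : E → ℝ) (hθ : ∀ e, 0 < θ e) (α : ℝ) (hα : 0 < α)
    (ρ : E → ℝ → ℝ) (hreg : ∀ e, ContDiff ℝ 2 (ρ e))
    (hode : ∀ e, ∀ x ∈ Set.Icc (0 : ℝ) (θ e),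
      deriv (deriv (ρ e)) x = -(α ^ 2) * ρ e x)
    (hbal : ∀ v : V,
      (∑ e ∈ Finset.univ.filter (fun e => t e = v), deriv (ρ e) 0) -
        (∑ e ∈ Finset.univ.filter (fun e => h e = v), deriv (ρ e) (θ e)) = 0) :
    ∑ e : E, ∫ x in (0 : ℝ)..(θ e), ρ e x = 0 :=
  stmt_18_general V E t h θ hθ α hα ρ hreg hode hbal
end
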